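/- arXiv:2411.12208 — 4 statements merged into one kernel-verified Lean document; each statement's English description precedes it below -/
import Mathlib

section
/- For all positive integers k ≤ l ≤ n, the Turán covering number T(n, l, k) — the smallest number of k-subsets of an n-set X such that every l-subset of X contains at least one of them — satisfies T(n, l, k) ≥ ((n−l+1)/(n−k+1)) · C(n,k) / C(l−1,k−1). -/
/-! de Caen's argument. Call a set independent if it contains no member of `F`, and let `f s`
be the number of independent `s`-sets; covering means `f l = 0`. For an independent `s`-set `R`
let `d R` be the number of points whose addition keeps `R` independent, so that
`∑ d R = (s+1) f (s+1)`, and Cauchy–Schwarz gives `((s+1) f (s+1))² ≤ f s · ∑ (d R)²`.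
Conversely `∑ (d R)²` is a sum over the independent `(s+1)`-sets `Q = R ∪ {u}`, and exchanging
`u ∈ Q` for `v ∉ Q` keeps `Q` independent for every `u` when `Q ∪ {v}` is independent, but for
at most `k - 1` choices of `u` otherwise (`u` must lie in the member of `F` inside `Q ∪ {v}`).
With `c = k |F| / C(n, k-1)` the two bounds propagate
`(s+1) f (s+1) ≥ f s · (n - s - c C(s, k-1))` upwards from `s = k - 1`, where it is an equality.
At the last level `s < l` with `f s > 0 = f (s+1)` this forces
`n - l + 1 ≤ n - s ≤ c C(l-1, k-1)`. -/

open Finset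

namespace TuranCovering

variable {α : Type*}

def IsIndep (F : Finset (Finset α)) (M : Finset α) : Prop := ∀ A ∈ F, ¬ A ⊆ M

lemma IsIndep.mono {F : Finset (Finset α)} {M N : Finset α} (hM : IsIndep F M) (hNM : N ⊆ M) :
    IsIndep F N :=
  fun A hA hAN => hM A hA (hAN.trans hNM)

variable [Fintype α] [DecidableEq α] (F : Finset (Finset α))

instance : DecidablePred (IsIndep F) := fun _ => by unfold IsIndep; infer_instance

def indepSets (j : ℕ) : Finset (Finset α) := (powersetCard j univ).filter (IsIndep F)

def extensions (R : Finset α) : Finset α := Rᶜ.filter fun x => IsIndep F (insert x R)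

variable {F}

lemma mem_indepSets {j : ℕ} {M : Finset α} : M ∈ indepSets F j ↔ #M = j ∧ IsIndep F M := by
  simp [indepSets]

lemma mem_extensions {R : Finset α} {x : α} :
    x ∈ extensions F R ↔ x ∉ R ∧ IsIndep F (insert x R) := by
  simp [extensions]

variable (F)

lemma sum_sum_extensions {β : Type*} [AddCommMonoid β] (g : Finset α → α → β) (s : ℕ) :
    ∑ R ∈ indepSets F s, ∑ x ∈ extensions F R, g (insert x R) x
      = ∑ Q ∈ indepSets F (s + 1), ∑ u ∈ Q, g Q u := by
  rw [sum_sigma', sum_sigma']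
  refine sum_nbij' (fun p => ⟨insert p.2 p.1, p.2⟩) (fun p => ⟨p.1.erase p.2, p.2⟩)
    ?_ ?_ ?_ ?_ fun _ _ => rfl
  · rintro ⟨R, x⟩ h
    simp only [mem_sigma, mem_indepSets, mem_extensions] at h ⊢
    exact ⟨⟨by rw [card_insert_of_notMem h.2.1, h.1.1], h.2.2⟩, mem_insert_self _ _⟩
  · rintro ⟨Q, u⟩ h
    simp only [mem_sigma, mem_indepSets, mem_extensions] at h ⊢
    refine ⟨⟨by rw [card_erase_of_mem h.2, h.1.1]; rfl, h.1.2.mono (erase_subset _ _)⟩,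
      notMem_erase _ _, by rw [insert_erase h.2]; exact h.1.2⟩
  · rintro ⟨R, x⟩ h
    simp only [mem_sigma, mem_extensions] at h
    simp [erase_insert h.2.1]
  · rintro ⟨Q, u⟩ h
    simp only [mem_sigma] at h
    simp [insert_erase h.2]

lemma sum_card_extensions (s : ℕ) :
    ∑ R ∈ indepSets F s, #(extensions F R) = (s + 1) * #(indepSets F (s + 1)) := by
  have := sum_sum_extensions F (fun _ _ => 1) s
  simp only [sum_const, smul_eq_mul, mul_one] at this
  rw [this, sum_congr rfl fun Q hQ => (mem_indepSets.1 hQ).1, sum_const, smul_eq_mul, mul_comm]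

lemma sum_sq_card_extensions (s : ℕ) :
    ∑ R ∈ indepSets F s, #(extensions F R) ^ 2
      = ∑ Q ∈ indepSets F (s + 1), ∑ u ∈ Q, #(extensions F (Q.erase u)) := by
  rw [← sum_sum_extensions F (fun Q u => #(extensions F (Q.erase u))) s]
  refine sum_congr rfl fun R _ => ?_
  rw [sq, ← smul_eq_mul, ← sum_const]
  refine sum_congr rfl fun x hx => ?_
  rw [erase_insert (mem_extensions.1 hx).1]

lemma sq_le_card_indepSets_mul_sum_sq (s : ℕ) :
    ((s + 1) * #(indepSets F (s + 1))) ^ 2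
      ≤ #(indepSets F s) * ∑ R ∈ indepSets F s, #(extensions F R) ^ 2 := by
  rw [← sum_card_extensions]
  exact sq_sum_le_card_mul_sum_sq

variable {F}

lemma card_indepSets_succ_eq_zero {s : ℕ} (h : #(indepSets F s) = 0) :
    #(indepSets F (s + 1)) = 0 := by
  have := sum_card_extensions F s
  rw [card_eq_zero.1 h, sum_empty] at this
  simpa using this.symm

lemma extensions_erase {Q : Finset α} {u : α} (hQ : IsIndep F Q) (hu : u ∈ Q) :
    extensions F (Q.erase u)
      = insert u (Qᶜ.filter fun v => IsIndep F (insert v (Q.erase u))) := by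
  ext x
  by_cases hxu : x = u
  · subst hxu
    simp [mem_extensions, insert_erase hu, hQ]
  · simp [mem_extensions, hxu]

lemma card_extensions_erase {Q : Finset α} {u : α} (hQ : IsIndep F Q) (hu : u ∈ Q) :
    #(extensions F (Q.erase u))
      = #(Qᶜ.filter fun v => IsIndep F (insert v (Q.erase u))) + 1 := by
  rw [extensions_erase hQ hu, card_insert_of_notMem]
  simp [hu]

lemma card_filter_isIndep_insert_erase_le {k : ℕ} (hFk : ∀ A ∈ F, #A = k) {Q : Finset α}
    {v : α} (hQ : IsIndep F Q) (hv : v ∉ Q) (hQv : ¬ IsIndep F (insert v Q)) :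
    #(Q.filter fun u => IsIndep F (insert v (Q.erase u))) ≤ k - 1 := by
  obtain ⟨A, hA, hAQv⟩ : ∃ A ∈ F, A ⊆ insert v Q := by simpa [IsIndep] using hQv
  have hvA : v ∈ A := by
    by_contra hvA
    exact hQ A hA ((subset_insert_iff_of_notMem hvA).1 hAQv)
  calc #(Q.filter fun u => IsIndep F (insert v (Q.erase u)))
      ≤ #(A.erase v) := card_le_card fun u hu => by
        obtain ⟨huQ, hindep⟩ := mem_filter.1 hu
        refine mem_erase.2 ⟨fun h => hv (h ▸ huQ), ?_⟩
        by_contra huA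
        refine hindep A hA fun a ha => ?_
        rcases mem_insert.1 (hAQv ha) with rfl | haQ
        · exact mem_insert_self _ _
        · exact mem_insert_of_mem (mem_erase.2 ⟨fun h => huA (h ▸ ha), haQ⟩)
    _ = k - 1 := by rw [card_erase_of_mem hvA, hFk A hA]

lemma sum_card_extensions_erase_le {k : ℕ} (hFk : ∀ A ∈ F, #A = k) {Q : Finset α}
    (hQ : IsIndep F Q) :
    ∑ u ∈ Q, #(extensions F (Q.erase u)) + (k - 1) * #(extensions F Q)
      ≤ #Q * (#(extensions F Q) + 1) + (k - 1) * #Qᶜ := by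
  let swap (u v : α) : Prop := IsIndep F (insert v (Q.erase u))
  let isExt (v : α) : ℕ := if IsIndep F (insert v Q) then 1 else 0
  have hext : #(extensions F Q) = ∑ v ∈ Qᶜ, isExt v := by rw [extensions, card_filter]
  have hswap : ∑ u ∈ Q, #(Qᶜ.filter (swap u)) = ∑ v ∈ Qᶜ, #(Q.filter (swap · v)) :=
    sum_card_bipartiteAbove_eq_sum_card_bipartiteBelow swap
  calc ∑ u ∈ Q, #(extensions F (Q.erase u)) + (k - 1) * #(extensions F Q)
      = ∑ v ∈ Qᶜ, (#(Q.filter (swap · v)) + (k - 1) * isExt v) + #Q := by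
        rw [sum_congr rfl fun u hu => card_extensions_erase hQ hu, sum_add_distrib, hswap, hext,
          mul_sum, sum_add_distrib, sum_const, smul_eq_mul, mul_one]
        ring
    _ ≤ ∑ v ∈ Qᶜ, (#Q * isExt v + (k - 1)) + #Q := by
        gcongr ?_ + _
        refine sum_le_sum fun v hv => ?_
        by_cases hQv : IsIndep F (insert v Q)
        · simpa [isExt, hQv] using card_filter_le Q (swap · v)
        · simpa [isExt, hQv] using
            card_filter_isIndep_insert_erase_le hFk hQ (mem_compl.1 hv) hQv
    _ = #Q * (#(extensions F Q) + 1) + (k - 1) * #Qᶜ := by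
        rw [sum_add_distrib, ← mul_sum, ← hext, sum_const, smul_eq_mul]
        ring

lemma sum_sq_card_extensions_le {k : ℕ} (hFk : ∀ A ∈ F, #A = k) (s : ℕ) :
    ∑ R ∈ indepSets F s, #(extensions F R) ^ 2 + (k - 1) * ((s + 2) * #(indepSets F (s + 2)))
      ≤ (s + 1) * (#(indepSets F (s + 1)) + (s + 2) * #(indepSets F (s + 2)))
        + (k - 1) * (Fintype.card α - (s + 1)) * #(indepSets F (s + 1)) := by
  rw [sum_sq_card_extensions, ← sum_card_extensions F (s + 1), mul_sum, ← sum_add_distrib]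
  calc ∑ Q ∈ indepSets F (s + 1),
        (∑ u ∈ Q, #(extensions F (Q.erase u)) + (k - 1) * #(extensions F Q))
      ≤ ∑ Q ∈ indepSets F (s + 1),
          ((s + 1) * (#(extensions F Q) + 1) + (k - 1) * (Fintype.card α - (s + 1))) := by
        refine sum_le_sum fun Q hQ => ?_
        obtain ⟨hQs, hQ⟩ := mem_indepSets.1 hQ
        simpa [hQs, card_compl] using sum_card_extensions_erase_le hFk hQ
    _ = _ := by
        rw [sum_add_distrib, ← mul_sum, sum_add_distrib, sum_const, sum_const, smul_eq_mul,
          smul_eq_mul]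
        ring

lemma card_indepSets_of_lt {k : ℕ} (hFk : ∀ A ∈ F, #A = k) {j : ℕ} (hj : j < k) :
    #(indepSets F j) = (Fintype.card α).choose j := by
  have : indepSets F j = powersetCard j univ :=
    filter_true_of_mem fun M hM A hA hAM => by
      have := card_le_card hAM
      rw [hFk A hA, (mem_powersetCard_univ.1 hM)] at this
      omega
  rw [this, card_powersetCard, card_univ]

lemma card_indepSets_add_card {k : ℕ} (hFk : ∀ A ∈ F, #A = k) :
    #(indepSets F k) + #F = (Fintype.card α).choose k := by
  have hF : F ⊆ powersetCard k univ := fun A hA => mem_powersetCard_univ.2 (hFk A hA)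
  have : indepSets F k = powersetCard k univ \ F := by
    ext M
    simp only [mem_indepSets, mem_sdiff, mem_powersetCard_univ, IsIndep]
    refine and_congr_right fun hM => ⟨fun h hMF => h M hMF subset_rfl, fun h A hA hAM => h ?_⟩
    rwa [← eq_of_subset_of_card_le hAM (by rw [hM, hFk A hA])]
  rw [this, card_sdiff_of_subset hF, card_powersetCard, card_univ, Nat.sub_add_cancel]
  simpa using card_le_card hF

lemma indepSets_eq_empty {l : ℕ} (hcov : ∀ L : Finset α, #L = l → ∃ A ∈ F, A ⊆ L) :
    indepSets F l = ∅ :=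
  eq_empty_of_forall_notMem fun M hM => by
    obtain ⟨hMl, hM⟩ := mem_indepSets.1 hM
    obtain ⟨A, hA, hAM⟩ := hcov M hMl
    exact hM A hA hAM

lemma cast_choose_mul_eq {n k : ℕ} (hk : 0 < k) (hkn : k - 1 ≤ n) :
    (n.choose k : ℝ) * k = n.choose (k - 1) * (n - k + 1) := by
  have := Nat.choose_succ_right_eq n (k - 1)
  rw [Nat.sub_add_cancel hk] at this
  have hcast : ((n - (k - 1) : ℕ) : ℝ) = n - k + 1 := by
    push_cast [Nat.cast_sub hkn, Nat.cast_pred hk]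
    ring
  rw [← hcast]
  exact_mod_cast this

lemma de_caen_step {a b d S n s k c p p' : ℝ} (ha : 0 ≤ a) (hab : a = 0 → b = 0)
    (hb : 0 ≤ b) (hd : 0 ≤ d) (hs : 0 ≤ s) (hks : k < s + 2) (hp : (s + 1) * p = (s + 2 - k) * p')
    (hCS : ((s + 1) * b) ^ 2 ≤ a * S)
    (hS : S + (k - 1) * ((s + 2) * d)
      ≤ (s + 1) * (b + (s + 2) * d) + (k - 1) * (n - (s + 1)) * b)
    (ih : a * (n - s - c * p) ≤ (s + 1) * b) :
    b * (n - (s + 1) - c * p') ≤ (s + 2) * d := by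
  rcases ha.eq_or_lt with rfl | ha
  · rw [hab rfl, zero_mul]
    positivity
  have key : 0 ≤ a * (s + 2 - k) * ((s + 2) * d - b * (n - (s + 1) - c * p')) := by
    linear_combination hCS + a * hS + (s + 1) * b * ih + a * b * c * hp
  have hak : 0 < a * (s + 2 - k) := mul_pos ha (by linarith)
  linarith [(mul_nonneg_iff_of_pos_left hak).1 key]

lemma card_indepSets_mul_le {k : ℕ} (hk : 0 < k) (hFk : ∀ A ∈ F, #A = k) {c : ℝ}
    (hc : c * (Fintype.card α).choose (k - 1) = k * #F) {s : ℕ} (hks : k - 1 ≤ s)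
    (hsn : s + 1 ≤ Fintype.card α) :
    (#(indepSets F s) : ℝ) * (Fintype.card α - s - c * s.choose (k - 1))
      ≤ (s + 1) * #(indepSets F (s + 1)) := by
  induction s, hks using Nat.le_induction with
  | base =>
    have hk1 : k - 1 + 1 = k := Nat.sub_add_cancel hk
    have hkn : k - 1 ≤ Fintype.card α := by omega
    have hfk : (#(indepSets F k) : ℝ) = (Fintype.card α).choose k - #F := by
      rw [eq_sub_iff_add_eq]
      exact_mod_cast card_indepSets_add_card hFk
    have hchoose := cast_choose_mul_eq hk hkn
    rw [hk1, hfk, card_indepSets_of_lt hFk (by omega), Nat.choose_self, Nat.cast_one, mul_one,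
      Nat.cast_sub hk]
    linear_combination -hchoose - hc
  | succ s hks ih =>
    have hp : ((s : ℝ) + 1) * s.choose (k - 1) = (s + 2 - k) * (s + 1).choose (k - 1) := by
      have := Nat.choose_mul_succ_eq s (k - 1)
      rw [show s + 1 - (k - 1) = s + 2 - k by omega] at this
      have hR : (s.choose (k - 1) : ℝ) * (s + 1)
          = (s + 1).choose (k - 1) * ((s + 2 - k : ℕ) : ℝ) := by
        exact_mod_cast this
      push_cast [Nat.cast_sub (show k ≤ s + 2 by omega)] at hR
      linear_combination hR
    have hCS : (((s : ℝ) + 1) * #(indepSets F (s + 1))) ^ 2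
        ≤ #(indepSets F s) * ∑ R ∈ indepSets F s, (#(extensions F R) : ℝ) ^ 2 := by
      exact_mod_cast sq_le_card_indepSets_mul_sum_sq F s
    have hS := (Nat.cast_le (α := ℝ)).2 (sum_sq_card_extensions_le hFk s)
    push_cast [Nat.cast_sub (show 1 ≤ k from hk),
      Nat.cast_sub (show s + 1 ≤ Fintype.card α by omega)] at hS
    have hab : (#(indepSets F s) : ℝ) = 0 → (#(indepSets F (s + 1)) : ℝ) = 0 := by
      exact_mod_cast card_indepSets_succ_eq_zero
    have := de_caen_step (by positivity) hab (by positivity) (by positivity) (by positivity)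
      (by norm_cast; omega) hp hCS hS (ih (by omega))
    convert this using 2 <;> push_cast <;> ring

lemma exists_pos_and_succ_eq_zero (f : ℕ → ℕ) {a b : ℕ} (hab : a ≤ b) (ha : 0 < f a)
    (hb : f b = 0) : ∃ s, a ≤ s ∧ s < b ∧ 0 < f s ∧ f (s + 1) = 0 := by
  induction b, hab using Nat.le_induction with
  | base => omega
  | succ b hab ih =>
    rcases Nat.eq_zero_or_pos (f b) with h | h
    · obtain ⟨s, has, hsb, hs⟩ := ih h
      exact ⟨s, has, by omega, hs⟩
    · exact ⟨b, hab, by omega, h, hb⟩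

theorem sub_add_one_mul_choose_le_mul_card_mul_choose {k l : ℕ} (hk : 0 < k) (hkl : k ≤ l)
    (hln : l ≤ Fintype.card α) (hFk : ∀ A ∈ F, #A = k)
    (hcov : ∀ L : Finset α, #L = l → ∃ A ∈ F, A ⊆ L) :
    ((Fintype.card α : ℝ) - l + 1) * (Fintype.card α).choose (k - 1)
      ≤ k * #F * (l - 1).choose (k - 1) := by
  set n := Fintype.card α
  have hC : 0 < (n.choose (k - 1) : ℝ) := by exact_mod_cast Nat.choose_pos (by omega)
  set c : ℝ := k * #F / n.choose (k - 1)
  have hc : c * n.choose (k - 1) = k * #F := div_mul_cancel₀ _ hC.ne'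
  have hbottom : 0 < #(indepSets F (k - 1)) := by
    rw [card_indepSets_of_lt hFk (by omega)]
    exact Nat.choose_pos (by omega)
  have htop : #(indepSets F l) = 0 := by rw [indepSets_eq_empty hcov, card_empty]
  obtain ⟨s, hks, hsl, hpos, hzero⟩ := exists_pos_and_succ_eq_zero (fun j => #(indepSets F j))
    (show k - 1 ≤ l by omega) hbottom htop
  have h := card_indepSets_mul_le hk hFk hc hks (by omega)
  rw [hzero, Nat.cast_zero, mul_zero] at h
  have hlast : (n : ℝ) - s ≤ c * s.choose (k - 1) := by
    have : (0 : ℝ) < #(indepSets F s) := by exact_mod_cast hpos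
    nlinarith
  have hsl' : (s : ℝ) + 1 ≤ l := by exact_mod_cast hsl
  have hmono : (s.choose (k - 1) : ℝ) ≤ (l - 1).choose (k - 1) := by
    exact_mod_cast Nat.choose_le_choose _ (by omega)
  calc ((n : ℝ) - l + 1) * n.choose (k - 1) ≤ (n - s) * n.choose (k - 1) := by gcongr; linarith
    _ ≤ c * (l - 1).choose (k - 1) * n.choose (k - 1) := by
      gcongr
      exact hlast.trans (by gcongr)
    _ = k * #F * (l - 1).choose (k - 1) := by rw [← hc]; ring

end TuranCovering

open TuranCovering in
/-- Turán covering number lower bound: any family `F` of `k`-subsets of `[n]`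
such that every `l`-subset contains at least one member of `F` satisfies
`|F| ≥ ((n-l+1)/(n-k+1)) · C(n,k) / C(l-1,k-1)`. -/
theorem stmt0 (n l k : ℕ) (hk : 0 < k) (hkl : k ≤ l) (hln : l ≤ n)
    (F : Finset (Finset (Fin n)))
    (hFk : ∀ A ∈ F, A.card = k)
    (hcov : ∀ L : Finset (Fin n), L.card = l → ∃ A ∈ F, A ⊆ L) :
    ((n : ℝ) - l + 1) / ((n : ℝ) - k + 1) * (n.choose k) / ((l - 1).choose (k - 1))
      ≤ (F.card : ℝ) := by
  have key := sub_add_one_mul_choose_le_mul_card_mul_choose hk hkl (by simpa using hln) hFk hcov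
  rw [Fintype.card_fin] at key
  have hchoose := cast_choose_mul_eq hk (show k - 1 ≤ n by omega)
  have hCl : 0 < ((l - 1).choose (k - 1) : ℝ) := by exact_mod_cast Nat.choose_pos (by omega)
  have hnk : (0 : ℝ) < n - k + 1 := by
    have : (k : ℝ) ≤ n := by exact_mod_cast hkl.trans hln
    linarith
  rw [div_le_iff₀ hCl, div_mul_eq_mul_div, div_le_iff₀ hnk]
  refine le_of_mul_le_mul_left ?_ (show (0 : ℝ) < k by exact_mod_cast hk)
  linear_combination (n - k + 1) * key + (n - l + 1) * hchoose
end

section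
/- For every k ≥ 2, the maximum number of hyperedges in a k-uniform hypergraph H on 2k+1 vertices that is H_k-free is at most C(2k+1, k) − ⌈C(2k+1, k+2) / (C(k+1,2) + k)⌉, where a copy of H_k is determined by a (k+2)-subset A of the vertex set and requires that every k-subset B with |B ∩ A| = 1 or |B ∩ A| = k is a hyperedge. -/
open Finset

lemma fiber_bound (k : ℕ) (B : Finset (Fin (2 * k + 1))) (hB : B.card = k) :
    ((Finset.univ.powersetCard (k + 2)).filter
      (fun A => (B ∩ A).card = 1 ∨ (B ∩ A).card = k)).card ≤ (k + 1).choose 2 + k := by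
  classical
  have hBc : Bᶜ.card = k + 1 := by
    rw [Finset.card_compl, hB]
    simp [Fintype.card_fin]
    omega
  set T := (B.powersetCard 1 ×ˢ Bᶜ.powersetCard (k + 1)) ∪
      (B.powersetCard k ×ˢ Bᶜ.powersetCard 2) with hT
  have hmem : ∀ A ∈ (Finset.univ.powersetCard (k + 2)).filter
      (fun A => (B ∩ A).card = 1 ∨ (B ∩ A).card = k),
      (A ∩ B, A \ B) ∈ T := by
    intro A hA
    simp only [Finset.mem_filter, Finset.mem_powersetCard] at hA
    obtain ⟨⟨-, hAcard⟩, hcase⟩ := hA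
    have hsplit : (A \ B).card + (A ∩ B).card = A.card := Finset.card_sdiff_add_card_inter A B
    have hsub : A \ B ⊆ Bᶜ := fun x hx => by
      simp only [Finset.mem_sdiff] at hx; simp [hx.2]
    have hIB : A ∩ B ⊆ B := Finset.inter_subset_right
    rcases hcase with h1 | h2
    · have : (A ∩ B).card = 1 := by rwa [Finset.inter_comm]
      refine Finset.mem_union_left _ ?_
      simp only [Finset.mem_product, Finset.mem_powersetCard]
      exact ⟨⟨hIB, this⟩, ⟨hsub, by omega⟩⟩
    · have : (A ∩ B).card = k := by rwa [Finset.inter_comm]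
      refine Finset.mem_union_right _ ?_
      simp only [Finset.mem_product, Finset.mem_powersetCard]
      exact ⟨⟨hIB, this⟩, ⟨hsub, by omega⟩⟩
  have hinj : Set.InjOn (fun A => (A ∩ B, A \ B))
      ((Finset.univ.powersetCard (k + 2)).filter
        (fun A => (B ∩ A).card = 1 ∨ (B ∩ A).card = k)) := by
    intro A hA A' hA' h
    simp only [Prod.mk.injEq] at h
    have : A \ B ∪ A ∩ B = A' \ B ∪ A' ∩ B := by rw [h.1, h.2]
    rwa [Finset.sdiff_union_inter, Finset.sdiff_union_inter] at this
  calc ((Finset.univ.powersetCard (k + 2)).filter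
      (fun A => (B ∩ A).card = 1 ∨ (B ∩ A).card = k)).card
      ≤ T.card := Finset.card_le_card_of_injOn _ hmem hinj
    _ ≤ (B.powersetCard 1 ×ˢ Bᶜ.powersetCard (k + 1)).card +
        (B.powersetCard k ×ˢ Bᶜ.powersetCard 2).card := Finset.card_union_le _ _
    _ = k.choose 1 * (k + 1).choose (k + 1) + k.choose k * (k + 1).choose 2 := by
        simp [Finset.card_product, Finset.card_powersetCard, hB, hBc]
    _ = (k + 1).choose 2 + k := by
        simp [Nat.choose_one_right, Nat.choose_self]
        omega

/-- Upper bound on the number of hyperedges of an `H_k`-free `k`-uniform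
hypergraph on `2k+1` vertices: at most
`C(2k+1,k) - ⌈C(2k+1,k+2) / (C(k+1,2) + k)⌉`.  Here a copy of `H_k` is
determined by a `(k+2)`-subset `A` and consists of all `k`-subsets `B` with
`|B ∩ A| = 1` or `|B ∩ A| = k`. -/
theorem stmt2 (k : ℕ) (hk : 2 ≤ k)
    (G : Finset (Finset (Fin (2 * k + 1))))
    (hGk : ∀ B ∈ G, B.card = k)
    (hfree : ∀ A : Finset (Fin (2 * k + 1)), A.card = k + 2 →
      ∃ B : Finset (Fin (2 * k + 1)), B.card = k ∧
        ((B ∩ A).card = 1 ∨ (B ∩ A).card = k) ∧ B ∉ G) :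
    (G.card : ℤ) ≤ ((2 * k + 1).choose k : ℤ) -
      ⌈(((2 * k + 1).choose (k + 2) : ℚ)) / (((k + 1).choose 2 + k : ℕ) : ℚ)⌉ := by
  classical
  set D := (k + 1).choose 2 + k with hD
  set 𝒜 := (Finset.univ : Finset (Fin (2 * k + 1))).powersetCard (k + 2) with h𝒜
  set M := ((Finset.univ : Finset (Fin (2 * k + 1))).powersetCard k).filter (· ∉ G) with hM
  -- choice of witness
  have key : ∀ A : Finset (Fin (2 * k + 1)), ∃ B : Finset (Fin (2 * k + 1)),
      A ∈ 𝒜 → B ∈ M ∧ ((B ∩ A).card = 1 ∨ (B ∩ A).card = k) := by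
    intro A
    by_cases hA : A ∈ 𝒜
    · have hAc : A.card = k + 2 := (Finset.mem_powersetCard.mp hA).2
      obtain ⟨B, hB1, hB2, hB3⟩ := hfree A hAc
      exact ⟨B, fun _ => ⟨by simp [hM, Finset.mem_powersetCard, hB1, hB3], hB2⟩⟩
    · exact ⟨∅, fun h => absurd h hA⟩
  choose g hg using key
  have hgM : ∀ A ∈ 𝒜, g A ∈ M := fun A hA => (hg A hA).1
  have hfib : 𝒜.card = ∑ B ∈ M, (𝒜.filter (fun A => g A = B)).card :=
    Finset.card_eq_sum_card_fiberwise hgM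
  have hfiblt : ∀ B ∈ M, (𝒜.filter (fun A => g A = B)).card ≤ D := by
    intro B hB
    have hBk : B.card = k := (Finset.mem_powersetCard.mp (Finset.mem_filter.mp hB).1).2
    have hsub : 𝒜.filter (fun A => g A = B) ⊆
        𝒜.filter (fun A => (B ∩ A).card = 1 ∨ (B ∩ A).card = k) := by
      intro A hA
      simp only [Finset.mem_filter] at hA ⊢
      exact ⟨hA.1, hA.2 ▸ (hg A hA.1).2⟩
    exact le_trans (Finset.card_le_card hsub) (fiber_bound k B hBk)
  have hcount : (2 * k + 1).choose (k + 2) ≤ M.card * D := by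
    have h1 : 𝒜.card = (2 * k + 1).choose (k + 2) := by
      simp [h𝒜, Finset.card_powersetCard, Fintype.card_fin]
    calc (2 * k + 1).choose (k + 2) = ∑ B ∈ M, (𝒜.filter (fun A => g A = B)).card := by
          rw [← h1, hfib]
      _ ≤ ∑ _B ∈ M, D := Finset.sum_le_sum hfiblt
      _ = M.card * D := by rw [Finset.sum_const, smul_eq_mul]
  -- G.card + M.card ≤ (2 * k + 1).choose k
  have hGM : G.card + M.card ≤ (2 * k + 1).choose k := by
    have hdisj : Disjoint G M := by
      rw [Finset.disjoint_left]
      intro B hBG hBM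
      exact (Finset.mem_filter.mp hBM).2 hBG
    have hsub : G ∪ M ⊆ (Finset.univ : Finset (Fin (2 * k + 1))).powersetCard k := by
      intro B hB
      rcases Finset.mem_union.mp hB with h | h
      · simp [Finset.mem_powersetCard, hGk B h]
      · exact (Finset.mem_filter.mp h).1
    calc G.card + M.card = (G ∪ M).card := (Finset.card_union_of_disjoint hdisj).symm
      _ ≤ ((Finset.univ : Finset (Fin (2 * k + 1))).powersetCard k).card := Finset.card_le_card hsub
      _ = (2 * k + 1).choose k := by simp [Finset.card_powersetCard, Fintype.card_fin]
  have hDpos : 0 < D := by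
    have : 0 < k := by omega
    omega
  have hceil : ⌈(((2 * k + 1).choose (k + 2) : ℚ)) / ((D : ℕ) : ℚ)⌉ ≤ (M.card : ℤ) := by
    rw [Int.ceil_le]
    rw [div_le_iff₀ (by exact_mod_cast hDpos)]
    push_cast
    exact_mod_cast hcount
  have : (G.card : ℤ) + (M.card : ℤ) ≤ ((2 * k + 1).choose k : ℤ) := by exact_mod_cast hGM
  omega
end

section
/- If a k-uniform hypergraph on 4m vertices (m ≥ 2) contains no copy of the complete (2m)-uniform hypergraph on 2m+1 vertices (with k = 2m), then it has at most C(4m, 2m) − C(4m, 2m)/(2m+1) = C(4m, 2m−1) hyperedges. -/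
/-!
Let `M` be the family of `k`-sets missing from `G`. Freeness says every `(k+1)`-set lies in the
upper shadow of `M`, and a `k`-set has only `n - k` one-point extensions, so
`C(n, k+1) ≤ |M| (n - k)`. Since `C(n, k+1) (k+1) = C(n, k) (n - k)`, this is
`(k+1) |G| ≤ k C(n, k)`. For `n = 4m`, `k = 2m` the quotient `C(4m, 2m) / (2m+1)` is the Catalan
number `c(2m)`, and `C(4m, 2m) - c(2m) = C(4m, 2m+1) = C(4m, 2m-1)`.
-/

open Finset
open scoped FinsetFamily

namespace Finset

variable {α : Type*} [DecidableEq α] [Fintype α]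

theorem card_upShadow_le {𝒜 : Finset (Finset α)} {r : ℕ} (h𝒜 : (𝒜 : Set (Finset α)).Sized r) :
    #(∂⁺ 𝒜) ≤ #𝒜 * (Fintype.card α - r) := by
  rw [upShadow, sup_eq_biUnion]
  refine card_biUnion_le_card_mul _ _ _ fun s hs => ?_
  calc #(sᶜ.image fun a => insert a s) ≤ #sᶜ := card_image_le
    _ = Fintype.card α - r := by rw [card_compl, h𝒜 hs]

theorem choose_succ_le_card_mul_of_subset_upShadow {𝒜 : Finset (Finset α)} {r : ℕ}
    (h𝒜 : (𝒜 : Set (Finset α)).Sized r) (hcover : powersetCard (r + 1) univ ⊆ ∂⁺ 𝒜) :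
    (Fintype.card α).choose (r + 1) ≤ #𝒜 * (Fintype.card α - r) := by
  calc (Fintype.card α).choose (r + 1) = #(powersetCard (r + 1) (univ : Finset α)) := by
        rw [card_powersetCard, card_univ]
    _ ≤ #(∂⁺ 𝒜) := card_le_card hcover
    _ ≤ _ := card_upShadow_le h𝒜

theorem powersetCard_succ_subset_upShadow_sdiff {G : Finset (Finset α)} {k : ℕ}
    (hfree : ∀ L : Finset α, #L = k + 1 → ∃ B ⊆ L, #B = k ∧ B ∉ G) :
    powersetCard (k + 1) univ ⊆ ∂⁺ (powersetCard k univ \ G) := by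
  intro L hL
  have hLk := (mem_powersetCard.1 hL).2
  obtain ⟨B, hBL, hBk, hBG⟩ := hfree L hLk
  refine mem_upShadow_iff_exists_sdiff.2 ⟨B, ?_, hBL, ?_⟩
  · exact mem_sdiff.2 ⟨mem_powersetCard.2 ⟨subset_univ B, hBk⟩, hBG⟩
  · rw [card_sdiff_of_subset hBL, hLk, hBk, Nat.add_sub_cancel_left]

theorem succ_mul_card_le_mul_choose {G : Finset (Finset α)} {k : ℕ}
    (hk : k < Fintype.card α) (hG : ∀ B ∈ G, #B = k)
    (hfree : ∀ L : Finset α, #L = k + 1 → ∃ B ⊆ L, #B = k ∧ B ∉ G) :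
    (k + 1) * #G ≤ k * (Fintype.card α).choose k := by
  set n := Fintype.card α
  have hGsub : G ⊆ powersetCard k univ := fun B hB =>
    mem_powersetCard.2 ⟨subset_univ B, hG B hB⟩
  have hGle : #G ≤ n.choose k := by
    simpa [card_powersetCard] using card_le_card hGsub
  have hsized : ((powersetCard k univ \ G : Finset (Finset α)) : Set (Finset α)).Sized k :=
    fun B hB => (mem_powersetCard.1 (mem_sdiff.1 hB).1).2
  have hcount := choose_succ_le_card_mul_of_subset_upShadow hsized
    (powersetCard_succ_subset_upShadow_sdiff hfree)
  rw [card_sdiff_of_subset hGsub, card_powersetCard, card_univ] at hcount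
  have hC : n.choose k ≤ (k + 1) * (n.choose k - #G) := by
    refine Nat.le_of_mul_le_mul_right (c := n - k) ?_ (by omega)
    rw [← Nat.choose_succ_right_eq, Nat.mul_assoc, Nat.mul_comm (k + 1)]
    exact Nat.mul_le_mul_right _ hcount
  zify [hGle] at hC ⊢
  linarith

end Finset

namespace Nat

theorem centralBinom_sub_catalan (n : ℕ) : n.centralBinom - catalan n = (2 * n).choose (n + 1) := by
  have h := choose_succ_right_eq (2 * n) n
  rw [← centralBinom_eq_two_mul_choose, show 2 * n - n = n by omega] at h
  refine Nat.eq_of_mul_eq_mul_right n.succ_pos ?_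
  rw [h, Nat.sub_mul, Nat.mul_comm (catalan n), _root_.succ_mul_catalan_eq_centralBinom, Nat.mul_add_one,
    Nat.add_sub_cancel]

end Nat

/-- If a `2m`-uniform hypergraph on `4m` vertices (`m ≥ 2`) contains no copy of
the complete `2m`-uniform hypergraph on `2m+1` vertices, then it has at most
`C(4m,2m) - C(4m,2m)/(2m+1) = C(4m,2m-1)` hyperedges. -/
theorem stmt3 (m : ℕ) (hm : 2 ≤ m)
    (G : Finset (Finset (Fin (4 * m))))
    (hGk : ∀ B ∈ G, B.card = 2 * m)
    (hfree : ∀ L : Finset (Fin (4 * m)), L.card = 2 * m + 1 →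
      ∃ B ⊆ L, B.card = 2 * m ∧ B ∉ G) :
    G.card ≤ (4 * m).choose (2 * m) - (4 * m).choose (2 * m) / (2 * m + 1) ∧
    (4 * m).choose (2 * m) - (4 * m).choose (2 * m) / (2 * m + 1)
      = (4 * m).choose (2 * m - 1) := by
  have hcentral : (4 * m).choose (2 * m) = (2 * m).centralBinom := by
    rw [Nat.centralBinom_eq_two_mul_choose, ← Nat.mul_assoc]
  have hcatalan : (4 * m).choose (2 * m) / (2 * m + 1) = catalan (2 * m) := by
    rw [hcentral, catalan_eq_centralBinom_div]
  have hbound := succ_mul_card_le_mul_choose (by simp; omega) hGk hfree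
  rw [Fintype.card_fin, hcentral, ← succ_mul_catalan_eq_centralBinom, Nat.mul_left_comm] at hbound
  have hsub : (4 * m).choose (2 * m) - (4 * m).choose (2 * m) / (2 * m + 1)
      = 2 * m * catalan (2 * m) := by
    rw [hcatalan, hcentral, ← succ_mul_catalan_eq_centralBinom, Nat.succ_mul, Nat.add_sub_cancel]
  refine ⟨hsub ▸ Nat.le_of_mul_le_mul_left hbound (by omega), ?_⟩
  rw [hcatalan, hcentral, Nat.centralBinom_sub_catalan, ← Nat.mul_assoc]
  exact Nat.choose_symm_of_eq_add (by omega)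
end

section
/- For every n×n symmetric matrix A over F_2 arising as adjacency matrix of a graph on n vertices, and every k-subset K of [n] with k ≤ n/2, if the submatrix A_{K×K̄} (rows in K, columns in the complement of K) has rank k over F_2, then the reduction to K of the associated graph state |G⟩ = 2^{−n/2} Σ_{c ∈ F_2^n} (−1)^{c·Ã·cᵀ} |c⟩ is the maximally mixed state I/2^k. -/
/-- Combine an assignment on `S` and on its complement into a full assignment. -/
def glue {n : ℕ} (S : Finset (Fin n)) (a : {x // x ∈ S} → ZMod 2)
    (b : {x // x ∈ Sᶜ} → ZMod 2) : Fin n → ZMod 2 :=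
  fun i => if h : i ∈ S then a ⟨i, h⟩ else b ⟨i, Finset.mem_compl.mpr h⟩

/-- The reduced density matrix of the pure state `ψ` on the set of qubits `S`
(partial trace of `|ψ⟩⟨ψ|` over the qubits outside `S`). -/
noncomputable def reduced {n : ℕ} (ψ : (Fin n → ZMod 2) → ℂ) (S : Finset (Fin n)) :
    Matrix ({x // x ∈ S} → ZMod 2) ({x // x ∈ S} → ZMod 2) ℂ :=
  Matrix.of fun a b => ∑ c : {x // x ∈ Sᶜ} → ZMod 2,
    ψ (glue S a c) * star (ψ (glue S b c))

/-- The graph state `|G⟩ = 2^{-n/2} Σ_c (-1)^{c·Ã·cᵀ} |c⟩` associated with the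
adjacency matrix `A` over `F_2`, where `Ã` is the strictly upper-triangular
part of `A`. -/
noncomputable def graphState {n : ℕ} (A : Matrix (Fin n) (Fin n) (ZMod 2)) :
    (Fin n → ZMod 2) → ℂ :=
  fun c => ((Real.sqrt (2 ^ n))⁻¹ : ℝ) *
    (-1 : ℂ) ^ (∑ i : Fin n, ∑ j : Fin n,
      if (i : ℕ) < (j : ℕ) then A i j * c i * c j else 0 : ZMod 2).val

/-! The entry of `ρ_K` at `(a, b)` is `2⁻ⁿ Σ_c (-1)^(Q(a,c) + Q(b,c))`, where
`Q x = x ⬝ᵥ Ã x` is the phase of `|G⟩`. Splitting `(a, c) = (a, 0) + (0, c)` and polarising `Q`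
(whose polar form is `Ã + Ãᵀ`, equal to `A` off the diagonal), the terms quadratic in `c` cancel
in characteristic 2, leaving a constant plus the linear form `((a + b) A_{K×K̄}) ⬝ᵥ c`. Its
character sum over `c` vanishes unless the form is zero, which by the full row rank of
`A_{K×K̄}` happens only when `a = b`; the diagonal entries are then `2⁻ⁿ 2ⁿ⁻ᵏ`. -/

open Matrix

noncomputable def signChar : AddChar (ZMod 2) ℂ :=
  AddChar.zmodChar 2 (by norm_num : (-1 : ℂ) ^ 2 = 1)

lemma signChar_apply (u : ZMod 2) : signChar u = (-1) ^ u.val := rfl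

lemma signChar_isPrimitive : signChar.IsPrimitive :=
  AddChar.zmodChar_primitive_of_primitive_root 2 (IsPrimitiveRoot.neg_one 0 (by norm_num))

lemma star_signChar (u : ZMod 2) : star (signChar u) = signChar u := by
  simp [signChar_apply]

theorem AddChar.map_sum_eq_prod {ι A M : Type*} [AddCommMonoid A] [CommMonoid M]
    (ψ : AddChar A M) (s : Finset ι) (f : ι → A) : ψ (∑ i ∈ s, f i) = ∏ i ∈ s, ψ (f i) := by
  classical
  induction s using Finset.induction_on with
  | empty => simp
  | insert i s hi ih => rw [Finset.sum_insert hi, map_add_eq_mul, ih, Finset.prod_insert hi]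

theorem AddChar.sum_apply_dotProduct {R R' ι : Type*} [CommRing R] [Fintype R] [DecidableEq R]
    [CommRing R'] [IsDomain R'] [Fintype ι] [DecidableEq ι] {ψ : AddChar R R'}
    (hψ : ψ.IsPrimitive) (w : ι → R) :
    ∑ c : ι → R, ψ (w ⬝ᵥ c) = if w = 0 then (Fintype.card R : R') ^ Fintype.card ι else 0 := by
  simp_rw [dotProduct, AddChar.map_sum_eq_prod, mul_comm (w _)]
  rw [← (Fintype.prod_sum fun j (t : R) => ψ (t * w j) :)]
  simp_rw [AddChar.sum_mulShift _ hψ]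
  split_ifs with hw
  · simp [hw]
  · obtain ⟨j, hj⟩ := Function.ne_iff.mp hw
    exact Finset.prod_eq_zero (Finset.mem_univ j) (by simp [show w j ≠ 0 from hj])

theorem Matrix.vecMul_injective_of_rank_eq_card {m l K : Type*} [Field K] [Fintype m] [Fintype l]
    (B : Matrix m l K) (h : B.rank = Fintype.card m) : Function.Injective B.vecMul :=
  vecMul_injective_iff.2 <| linearIndependent_iff_card_eq_finrank_span.2 <|
    h ▸ B.rank_eq_finrank_span_row

theorem Matrix.add_dotProduct_mulVec_add {m R : Type*} [Fintype m] [CommSemiring R]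
    (M : Matrix m m R) (x y : m → R) :
    (x + y) ⬝ᵥ (M *ᵥ (x + y)) = x ⬝ᵥ (M *ᵥ x) + y ⬝ᵥ (M *ᵥ y) + x ⬝ᵥ ((M + Mᵀ) *ᵥ y) := by
  simp only [mulVec_add, add_mulVec, add_dotProduct, dotProduct_add, mulVec_transpose,
    dotProduct_mulVec y, dotProduct_comm _ x]
  abel

section Glue

variable {n : ℕ} (S : Finset (Fin n))

lemma sum_glue {M : Type*} [AddCommMonoid M] (f : Fin n → ZMod 2 → M)
    (a : S → ZMod 2) (b : ↥Sᶜ → ZMod 2) :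
    ∑ i, f i (glue S a b i) = ∑ p : S, f p (a p) + ∑ q : ↥Sᶜ, f q (b q) := by
  rw [← Finset.sum_add_sum_compl S, ← Finset.sum_coe_sort S, ← Finset.sum_coe_sort Sᶜ]
  congr 1 <;> refine Finset.sum_congr rfl fun p _ => ?_
  · simp [glue, p.2]
  · simp [glue, Finset.mem_compl.mp p.2]

lemma glue_add (a a' : S → ZMod 2) (b b' : ↥Sᶜ → ZMod 2) :
    glue S (a + a') (b + b') = glue S a b + glue S a' b' := by
  ext i
  simp only [glue, Pi.add_apply]
  split_ifs <;> rfl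

lemma glue_dotProduct_mulVec_glue (M : Matrix (Fin n) (Fin n) (ZMod 2))
    (a : S → ZMod 2) (b : ↥Sᶜ → ZMod 2) :
    glue S a 0 ⬝ᵥ (M *ᵥ glue S 0 b) = a ᵥ* M.submatrix (↑) (↑) ⬝ᵥ b := by
  rw [dotProduct_mulVec, dotProduct, sum_glue, dotProduct]
  simp only [Pi.zero_apply, mul_zero, Finset.sum_const_zero, zero_add]
  refine Finset.sum_congr rfl fun q _ => ?_
  congr 1
  rw [vecMul, dotProduct, sum_glue S fun i t => t * M i q]
  simp [vecMul, dotProduct]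

end Glue

section GraphState

variable {n : ℕ}

def strictUpper {R : Type*} [Zero R] (A : Matrix (Fin n) (Fin n) R) :
    Matrix (Fin n) (Fin n) R :=
  of fun i j => if i < j then A i j else 0

lemma strictUpper_add_transpose_apply {R : Type*} [AddZeroClass R]
    {A : Matrix (Fin n) (Fin n) R} (hA : A.IsSymm) {i j : Fin n} (hij : i ≠ j) :
    (strictUpper A + (strictUpper A)ᵀ) i j = A i j := by
  rcases hij.lt_or_gt with h | h
  · simp [strictUpper, h, h.not_gt]
  · simp [strictUpper, h, h.not_gt, hA.apply i j]

lemma graphState_apply (A : Matrix (Fin n) (Fin n) (ZMod 2)) (c : Fin n → ZMod 2) :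
    graphState A c = ((√(2 ^ n))⁻¹ : ℝ) * signChar (c ⬝ᵥ (strictUpper A *ᵥ c)) := by
  rw [graphState, signChar_apply]
  congr 3
  simp only [dotProduct, mulVec, strictUpper, of_apply, Finset.mul_sum]
  refine Finset.sum_congr rfl fun i _ => Finset.sum_congr rfl fun j _ => ?_
  simp only [Fin.val_fin_lt]
  split_ifs <;> ring

lemma graphState_mul_star (A : Matrix (Fin n) (Fin n) (ZMod 2)) (x y : Fin n → ZMod 2) :
    graphState A x * star (graphState A y) =
      ((2 : ℂ) ^ n)⁻¹ * signChar (x ⬝ᵥ (strictUpper A *ᵥ x) + y ⬝ᵥ (strictUpper A *ᵥ y)) := by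
  rw [graphState_apply, graphState_apply, star_mul', star_signChar, Complex.star_def,
    Complex.conj_ofReal, AddChar.map_add_eq_mul, mul_mul_mul_comm, ← Complex.ofReal_mul,
    ← mul_inv, Real.mul_self_sqrt (by positivity)]
  push_cast
  rfl

end GraphState

section Reduction

variable {n : ℕ} {A : Matrix (Fin n) (Fin n) (ZMod 2)} (K : Finset (Fin n))

local notation "Q" x => x ⬝ᵥ (strictUpper A *ᵥ x)

lemma phase_glue_add_phase_glue (hA : A.IsSymm) (a b : K → ZMod 2) (c : ↥Kᶜ → ZMod 2) :
    (Q glue K a c) + (Q glue K b c) =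
      (Q glue K a 0) + (Q glue K b 0) + (a + b) ᵥ* A.submatrix (↑) (↑) ⬝ᵥ c := by
  have hsplit (a : K → ZMod 2) : glue K a c = glue K a 0 + glue K 0 c := by
    simpa using glue_add K a 0 0 c
  have hcross : (strictUpper A + (strictUpper A)ᵀ).submatrix ((↑) : K → Fin n) ((↑) : ↥Kᶜ → Fin n)
      = A.submatrix (↑) (↑) := by
    ext p q
    exact strictUpper_add_transpose_apply hA fun h => Finset.mem_compl.mp q.2 (h ▸ p.2)
  rw [hsplit a, hsplit b, add_dotProduct_mulVec_add, add_dotProduct_mulVec_add,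
    glue_dotProduct_mulVec_glue, glue_dotProduct_mulVec_glue, hcross, add_vecMul, add_dotProduct]
  linear_combination (Q glue K 0 c) * (by decide : (2 : ZMod 2) = 0)

lemma reduced_graphState_apply (hA : A.IsSymm) (a b : K → ZMod 2) :
    reduced (graphState A) K a b = ((2 : ℂ) ^ n)⁻¹ * signChar ((Q glue K a 0) + (Q glue K b 0)) *
      ∑ c : ↥Kᶜ → ZMod 2, signChar ((a + b) ᵥ* A.submatrix (↑) (↑) ⬝ᵥ c) := by
  simp only [reduced, of_apply, Finset.mul_sum, graphState_mul_star]
  refine Finset.sum_congr rfl fun c _ => ?_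
  rw [phase_glue_add_phase_glue K hA, AddChar.map_add_eq_mul, mul_assoc]

end Reduction

theorem stmt4_general (n k : ℕ) (A : Matrix (Fin n) (Fin n) (ZMod 2))
    (hsymm : A.IsSymm)
    (K : Finset (Fin n)) (hK : K.card = k)
    (hrank : (A.submatrix (fun i : {x // x ∈ K} => (i : Fin n))
        (fun j : {x // x ∈ Kᶜ} => (j : Fin n))).rank = k) :
    reduced (graphState A) K = ((2 : ℂ) ^ k)⁻¹ • 1 := by
  subst hK
  have hinj := vecMul_injective_of_rank_eq_card _ (hrank.trans (Fintype.card_coe K).symm)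
  ext a b
  rw [reduced_graphState_apply K hsymm, AddChar.sum_apply_dotProduct signChar_isPrimitive]
  rcases eq_or_ne a b with rfl | hab
  · have hcard : (2 : ℂ) ^ n = 2 ^ (n - K.card) * 2 ^ K.card := by
      rw [← pow_add, Nat.sub_add_cancel (K.card_le_univ.trans_eq (Fintype.card_fin n))]
    have haa : a + a = 0 := funext fun p => CharTwo.add_self_eq_zero (a p)
    simp [haa, CharTwo.add_self_eq_zero, hcard]
  · have hw : (a + b) ᵥ* A.submatrix ((↑) : K → Fin n) ((↑) : ↥Kᶜ → Fin n) ≠ 0 := fun h =>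
      hab <| funext fun p =>
        CharTwo.add_eq_zero.mp (congrFun (hinj (h.trans (zero_vecMul _).symm)) p)
    simp [hw, hab]

/-- If the submatrix `A_{K × K̄}` of the adjacency matrix of a graph has full
rank `k = |K|` over `F_2` (with `k ≤ n/2`), then the reduction of the graph
state `|G⟩` to `K` is maximally mixed. -/
theorem stmt4 (n k : ℕ) (A : Matrix (Fin n) (Fin n) (ZMod 2))
    (hsymm : A.IsSymm) (hdiag : ∀ i, A i i = 0)
    (K : Finset (Fin n)) (hK : K.card = k) (hk : 2 * k ≤ n)
    (hrank : (A.submatrix (fun i : {x // x ∈ K} => (i : Fin n))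
        (fun j : {x // x ∈ Kᶜ} => (j : Fin n))).rank = k) :
    reduced (graphState A) K = ((2 : ℂ) ^ k)⁻¹ • 1 :=
  stmt4_general n k A hsymm K hK hrank
end
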